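/- The cohomology class of the 3-cocycle α(a,b,c) = ⌊a'+b'⌋·c' on ℤ/nℤ with values in ℚ/ℤ has exact order n in H³(ℤ/nℤ; ℚ/ℤ); in particular it generates H³(ℤ/nℤ; ℚ/ℤ) ≅ ℤ/nℤ. -/

import Mathlib

section Cochains

variable (G : Type) [Group G] (M : Type) [AddCommGroup M]

/-- The inhomogeneous coboundary `d² : C²(G;M) → C³(G;M)` for trivial coefficients. -/
def cobound2 : (G → G → M) →+ (G → G → G → M) :=
  AddMonoidHom.mk'
    (fun f g h k => f h k - f (g * h) k + f g (h * k) - f g h)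
    (by intro f₁ f₂; funext g h k; simp only [Pi.add_apply]; abel)

/-- The inhomogeneous coboundary `d³ : C³(G;M) → C⁴(G;M)` for trivial coefficients. -/
def cobound3 : (G → G → G → M) →+ (G → G → G → G → M) :=
  AddMonoidHom.mk'
    (fun f g h k l =>
      f h k l - f (g * h) k l + f g (h * k) l - f g h (k * l) + f g h k)
    (by intro f₁ f₂; funext g h k l; simp only [Pi.add_apply]; abel)

/-- Third group cohomology `H³(G; M)` with trivial coefficients, as 3-cocycles
modulo 3-coboundaries. -/
def thirdCohomology : Type :=
  (cobound3 G M).ker ⧸ ((cobound2 G M).range.addSubgroupOf (cobound3 G M).ker)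

instance : AddCommGroup (thirdCohomology G M) :=
  inferInstanceAs (AddCommGroup
    ((cobound3 G M).ker ⧸ ((cobound2 G M).range.addSubgroupOf (cobound3 G M).ker)))

end Cochains

/-- The fractional representative `x' ∈ (1/n)ℤ ∩ [0,1)` of a class `x ∈ ℤ/nℤ ≅ (1/n)ℤ/ℤ`. -/
def fracRep (n : ℕ) (x : ZMod n) : ℚ := (x.val : ℚ) / n

/-- The 3-cocycle `α(a,b,c) = ⌊a' + b'⌋ · c'  (mod ℤ)` on the cyclic group `ℤ/nℤ`
(written multiplicatively), with values in `ℚ/ℤ`. -/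
noncomputable def platonicCocycle (n : ℕ)
    (a b c : Multiplicative (ZMod n)) : AddCircle (1 : ℚ) :=
  ((⌊fracRep n a.toAdd + fracRep n b.toAdd⌋ : ℚ) * fracRep n c.toAdd : ℚ)

/-!
For a 3-cochain `f` on a finite group `G` and `g ∈ G` put `S f = ∑ₕ f(g, h, g)`. Reindexing
`h ↦ g h` and `h ↦ h g` shows `S (δu) = 0`, so `S` descends to `H³(G; M)`.

For `G = ℤ/nℤ` and `g = 1`, this map is injective. If `f` is a cocycle with `S f = 0`, the
cocycle identity at `(x, g, h, g)`, summed over `h`, gives `∑ₕ f(x, h, g) = 0` for every `x`.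
So `h ↦ f(x, h, g)` has a discrete antiderivative `w(x, ·)` along `g`, and `f = δ(-w)` follows
by induction on the last argument from the cocycle identity at `(x, y, z, g)`.

Averaging the cocycle identity over its last argument shows that `n` kills `H³(ℤ/nℤ; M)`.
The carries `⌊1' + h'⌋` add up to `n · 1'`, so `S α = n · 1'² = 1/n` in `ℚ/ℤ`. Hence `S`
identifies `H³(ℤ/nℤ; ℚ/ℤ)` with the `n`-torsion of `ℚ/ℤ`, which is cyclic of order `n` and
generated by `1/n`.
-/

open Finset

section Cohomology

variable {G : Type} [Group G] {M : Type} [AddCommGroup M] {f : G → G → G → M}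

theorem mem_ker_cobound3_apply (hf : f ∈ (cobound3 G M).ker) (x y z w : G) :
    f y z w - f (x * y) z w + f x (y * z) w - f x y (z * w) + f x y z = 0 :=
  congrFun (congrFun (congrFun (congrFun (AddMonoidHom.mem_ker.mp hf) x) y) z) w

theorem cobound2_neg_eq_of_recursion {g : G} (hg : ∀ z : G, ∃ k : ℕ, g ^ k = z)
    (hf : f ∈ (cobound3 G M).ker) (w : G → G → M) (hw_one : ∀ x, w x 1 = f x 1 1)
    (hw_mul : ∀ x v, w x (v * g) = w x v - f x v g) :
    cobound2 G M (-w) = f := by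
  funext x y z
  obtain ⟨k, rfl⟩ := hg z
  simp only [cobound2, AddMonoidHom.mk'_apply, Pi.neg_apply]
  induction k with
  | zero =>
    have h := mem_ker_cobound3_apply hf x y 1 1
    simp only [pow_zero, mul_one, hw_one] at h ⊢
    linear_combination (norm := abel) -h
  | succ k ih =>
    have h := mem_ker_cobound3_apply hf x y (g ^ k) g
    rw [pow_succ, ← mul_assoc, hw_mul, hw_mul, hw_mul]
    linear_combination (norm := abel) ih + h

variable [Fintype G]

theorem card_nsmul_mem_range_cobound2 (hf : f ∈ (cobound3 G M).ker) :
    Fintype.card G • f ∈ (cobound2 G M).range := by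
  refine ⟨fun a b => -∑ w, f a b w, funext fun x => funext fun y => funext fun z => ?_⟩
  have h := sum_eq_zero (s := univ) fun w _ => mem_ker_cobound3_apply hf x y z w
  have hshift : ∑ w, f x y (z * w) = ∑ w, f x y w := Equiv.sum_comp (Equiv.mulLeft z) (f x y)
  simp only [sum_add_distrib, sum_sub_distrib, hshift, sum_const, card_univ] at h
  simp only [cobound2, AddMonoidHom.mk'_apply, Pi.smul_apply]
  linear_combination (norm := abel) -h

theorem thirdCohomology.card_nsmul_eq_zero (y : thirdCohomology G M) :
    Fintype.card G • y = 0 := by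
  obtain ⟨f, rfl⟩ := QuotientAddGroup.mk_surjective y
  exact (QuotientAddGroup.eq_zero_iff _).mpr
    (AddSubgroup.mem_addSubgroupOf.mpr (card_nsmul_mem_range_cobound2 f.2))

def cochainSum (g : G) : (G → G → G → M) →+ M where
  toFun f := ∑ h, f g h g
  map_zero' := by simp
  map_add' _ _ := sum_add_distrib

theorem cochainSum_cobound2 (g : G) (u : G → G → M) : cochainSum g (cobound2 G M u) = 0 := by
  have h₁ : ∑ h, u (g * h) g = ∑ h, u h g := Equiv.sum_comp (Equiv.mulLeft g) (u · g)
  have h₂ : ∑ h, u g (h * g) = ∑ h, u g h := Equiv.sum_comp (Equiv.mulRight g) (u g)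
  simp only [cochainSum, cobound2, AddMonoidHom.coe_mk, ZeroHom.coe_mk, AddMonoidHom.mk'_apply,
    sum_add_distrib, sum_sub_distrib, h₁, h₂]
  abel

def thirdCohomology.cochainSumHom (g : G) : thirdCohomology G M →+ M :=
  QuotientAddGroup.lift _ ((cochainSum g).comp (cobound3 G M).ker.subtype) fun f hf => by
    obtain ⟨u, hu⟩ := AddSubgroup.mem_addSubgroupOf.mp hf
    simp [← hu, cochainSum_cobound2]

theorem sum_cocycle_one_eq_zero (hf : f ∈ (cobound3 G M).ker) (g : G) : ∑ h, f 1 h g = 0 := by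
  have hstep : ∀ h, f 1 h g = f 1 1 (h * g) - f 1 1 h := fun h => by
    have := mem_ker_cobound3_apply hf 1 1 h g
    simp only [one_mul] at this
    linear_combination (norm := abel) this
  have hshift : ∑ h, f 1 1 (h * g) = ∑ h, f 1 1 h := Equiv.sum_comp (Equiv.mulRight g) (f 1 1)
  rw [Fintype.sum_congr _ _ hstep, sum_sub_distrib, hshift, sub_self]

theorem sum_cocycle_mul (hf : f ∈ (cobound3 G M).ker) (x g : G) :
    ∑ h, f (x * g) h g = ∑ h, f x h g + cochainSum g f := by
  have h := sum_eq_zero (s := univ) fun h _ => mem_ker_cobound3_apply hf x g h g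
  have h₁ : ∑ h, f x (g * h) g = ∑ h, f x h g := Equiv.sum_comp (Equiv.mulLeft g) (f x · g)
  have h₂ : ∑ h, f x g (h * g) = ∑ h, f x g h := Equiv.sum_comp (Equiv.mulRight g) (f x g)
  simp only [sum_add_distrib, sum_sub_distrib, h₁, h₂] at h
  rw [cochainSum, AddMonoidHom.coe_mk, ZeroHom.coe_mk]
  linear_combination (norm := abel) -h

theorem sum_cocycle_eq_zero {g : G} (hg : ∀ z : G, ∃ k : ℕ, g ^ k = z)
    (hf : f ∈ (cobound3 G M).ker) (hS : cochainSum g f = 0) (x : G) : ∑ h, f x h g = 0 := by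
  obtain ⟨k, rfl⟩ := hg x
  induction k with
  | zero => simpa using sum_cocycle_one_eq_zero hf g
  | succ k ih => rw [pow_succ, sum_cocycle_mul hf, ih, hS, add_zero]

end Cohomology

section CyclicGroup

open Multiplicative

variable {n : ℕ} [NeZero n] {M : Type} [AddCommGroup M]

theorem ZMod.sum_range_eq_sum (φ : ZMod n → M) : ∑ j ∈ range n, φ j = ∑ x, φ x :=
  sum_nbij' (↑) ZMod.val (by simp) (fun x _ => mem_range.mpr x.val_lt)
    (fun _ hj => ZMod.val_natCast_of_lt (mem_range.mp hj)) (fun x _ => ZMod.natCast_zmod_val x)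
    fun _ _ => rfl

theorem ZMod.sum_range_val_add_one (φ : ZMod n → M) (hφ : ∑ x, φ x = 0) (v : ZMod n) :
    ∑ j ∈ range (v + 1).val, φ j = ∑ j ∈ range v.val, φ j + φ v := by
  have hval : (v + 1).val = (v.val + 1) % n := by
    rw [ZMod.val_add, ZMod.val_one_eq_one_mod, Nat.add_mod_mod]
  have hsucc : ∑ j ∈ range v.val, φ j + φ v = ∑ j ∈ range (v.val + 1), φ j := by
    rw [sum_range_succ, ZMod.natCast_zmod_val]
  rw [hsucc]
  rcases (show v.val + 1 ≤ n from v.val_lt).lt_or_eq with hv | hv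
  · rw [hval, Nat.mod_eq_of_lt hv]
  · rw [hval, hv, Nat.mod_self, ZMod.sum_range_eq_sum, hφ, sum_range_zero]

theorem exists_pow_ofAdd_one (z : Multiplicative (ZMod n)) :
    ∃ k : ℕ, ofAdd (1 : ZMod n) ^ k = z :=
  ⟨z.toAdd.val, by rw [← ofAdd_nsmul, nsmul_one, ZMod.natCast_zmod_val, ofAdd_toAdd]⟩

theorem mem_range_cobound2_of_cochainSum_eq_zero
    {f : Multiplicative (ZMod n) → Multiplicative (ZMod n) → Multiplicative (ZMod n) → M}
    (hf : f ∈ (cobound3 _ M).ker) (hS : cochainSum (ofAdd 1) f = 0) :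
    f ∈ (cobound2 _ M).range := by
  refine ⟨_, cobound2_neg_eq_of_recursion exists_pow_ofAdd_one hf
    (fun x y => f x 1 1 - ∑ j ∈ range y.toAdd.val, f x (ofAdd j) (ofAdd 1)) (fun x => by simp)
    fun x v => ?_⟩
  rw [toAdd_mul, toAdd_ofAdd, ZMod.sum_range_val_add_one (fun j => f x (ofAdd j) (ofAdd 1))
    ((ofAdd.sum_comp _).trans (sum_cocycle_eq_zero exists_pow_ofAdd_one hf hS x)), ofAdd_toAdd]
  abel

theorem thirdCohomology.cochainSumHom_injective :
    Function.Injective (thirdCohomology.cochainSumHom (M := M) (ofAdd (1 : ZMod n))) := by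
  refine (injective_iff_map_eq_zero _).mpr fun y hy => ?_
  obtain ⟨f, rfl⟩ := QuotientAddGroup.mk_surjective y
  exact (QuotientAddGroup.eq_zero_iff _).mpr
    (AddSubgroup.mem_addSubgroupOf.mpr (mem_range_cobound2_of_cochainSum_eq_zero f.2 hy))

end CyclicGroup

theorem AddCircle.mem_zmultiples_of_nsmul_eq_zero {𝕜 : Type*} [Field 𝕜] [LinearOrder 𝕜]
    [IsStrictOrderedRing 𝕜] {p : 𝕜} [Fact (0 < p)] {n : ℕ} (hn : 0 < n) {u : AddCircle p}
    (hu : n • u = 0) : u ∈ AddSubgroup.zmultiples ((p / n : 𝕜) : AddCircle p) := by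
  obtain ⟨m, -, rfl⟩ := (AddCircle.nsmul_eq_zero_iff hn).mp hu
  rw [AddCircle.natCast_div_mul_eq_nsmul]
  exact AddSubgroup.nsmul_mem _ (AddSubgroup.mem_zmultiples _) m

section Platonic

open Multiplicative

variable {n : ℕ} [NeZero n]

theorem fracRep_add (x y : ZMod n) :
    fracRep n (x + y) = fracRep n x + fracRep n y - ⌊fracRep n x + fracRep n y⌋ := by
  rw [Int.self_sub_floor, fracRep, fracRep, fracRep, ← add_div, ZMod.val_add, ← Nat.cast_add,
    Int.fract_div_natCast_eq_div_natCast_mod]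

theorem floor_fracRep_add_left (x y z : ZMod n) :
    ⌊fracRep n (x + y) + fracRep n z⌋ =
      ⌊fracRep n x + fracRep n y + fracRep n z⌋ - ⌊fracRep n x + fracRep n y⌋ := by
  rw [fracRep_add, sub_add_eq_add_sub, Int.floor_sub_intCast]

theorem floor_fracRep_add_right (x y z : ZMod n) :
    ⌊fracRep n x + fracRep n (y + z)⌋ =
      ⌊fracRep n x + fracRep n y + fracRep n z⌋ - ⌊fracRep n y + fracRep n z⌋ := by
  rw [fracRep_add, ← add_sub_assoc, ← add_assoc, Int.floor_sub_intCast]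

theorem sum_floor_fracRep_add (x : ZMod n) :
    ∑ y, (⌊fracRep n x + fracRep n y⌋ : ℚ) = x.val := by
  have hcarry (y : ZMod n) :
      (⌊fracRep n x + fracRep n y⌋ : ℚ) = fracRep n x + fracRep n y - fracRep n (x + y) := by
    rw [fracRep_add, sub_sub_cancel]
  have hshift : ∑ y, fracRep n (x + y) = ∑ y, fracRep n y := Equiv.sum_comp (Equiv.addLeft x) _
  rw [Fintype.sum_congr _ _ hcarry, sum_sub_distrib, sum_add_distrib, hshift, add_sub_cancel_right,
    sum_const, card_univ, ZMod.card, nsmul_eq_mul, fracRep,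
    mul_div_cancel₀ _ (Nat.cast_ne_zero.mpr (NeZero.ne n))]

theorem platonicCocycle_mem_ker :
    platonicCocycle n ∈ (cobound3 (Multiplicative (ZMod n)) (AddCircle (1 : ℚ))).ker := by
  rw [AddMonoidHom.mem_ker]
  funext x y z w
  simp only [cobound3, AddMonoidHom.mk'_apply, platonicCocycle, toAdd_mul, Pi.zero_apply,
    ← AddCircle.coe_sub, ← AddCircle.coe_add]
  rw [floor_fracRep_add_left, floor_fracRep_add_right, fracRep_add z.toAdd w.toAdd,
    AddCircle.coe_eq_zero_iff]
  exact ⟨⌊fracRep n x.toAdd + fracRep n y.toAdd⌋ * ⌊fracRep n z.toAdd + fracRep n w.toAdd⌋,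
    by push_cast; ring⟩

theorem cochainSum_platonicCocycle :
    cochainSum (ofAdd 1) (platonicCocycle n) = ((1 / n : ℚ) : AddCircle (1 : ℚ)) := by
  have hsum : ∑ h : Multiplicative (ZMod n), (⌊fracRep n 1 + fracRep n h.toAdd⌋ : ℚ) *
      fracRep n 1 = (1 : ZMod n).val * fracRep n 1 := by
    rw [← sum_mul, toAdd.sum_comp fun y => (⌊fracRep n 1 + fracRep n y⌋ : ℚ),
      sum_floor_fracRep_add]
  simp only [cochainSum, platonicCocycle, AddMonoidHom.coe_mk, ZeroHom.coe_mk, toAdd_ofAdd]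
  rw [← QuotientAddGroup.mk_sum, hsum, fracRep]
  rcases eq_or_ne n 1 with rfl | hn
  · simp only [ZMod.val_one_eq_one_mod, Nat.mod_self, Nat.cast_zero, zero_mul, Nat.cast_one,
      div_one, AddCircle.coe_period, QuotientAddGroup.mk_zero]
  · have : Fact (1 < n) := ⟨by have := NeZero.ne n; omega⟩
    simp [ZMod.val_one]

end Platonic

/-- The class of the 3-cocycle `α(a,b,c) = ⌊a'+b'⌋·c'` has exact order `n` in
`H³(ℤ/nℤ; ℚ/ℤ)`; in particular it generates `H³(ℤ/nℤ; ℚ/ℤ) ≅ ℤ/nℤ`. -/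
theorem platonicCocycle_class_order (n : ℕ) (hn : 1 ≤ n) :
    ∃ hα : platonicCocycle n ∈
        (cobound3 (Multiplicative (ZMod n)) (AddCircle (1 : ℚ))).ker,
      addOrderOf
          (QuotientAddGroup.mk (s := ((cobound2 (Multiplicative (ZMod n))
              (AddCircle (1 : ℚ))).range.addSubgroupOf
              (cobound3 (Multiplicative (ZMod n)) (AddCircle (1 : ℚ))).ker))
            ⟨platonicCocycle n, hα⟩) = n ∧
        ∀ y : thirdCohomology (Multiplicative (ZMod n)) (AddCircle (1 : ℚ)),
          ∃ k : ℤ, y = k • (QuotientAddGroup.mk ⟨platonicCocycle n, hα⟩ :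
            thirdCohomology (Multiplicative (ZMod n)) (AddCircle (1 : ℚ))) := by
  have : NeZero n := ⟨by omega⟩
  let Φ := thirdCohomology.cochainSumHom (M := AddCircle (1 : ℚ))
    (Multiplicative.ofAdd (1 : ZMod n))
  have hΦ : Function.Injective Φ := thirdCohomology.cochainSumHom_injective
  have hΦα : Φ (QuotientAddGroup.mk ⟨_, platonicCocycle_mem_ker⟩) =
      ((1 / n : ℚ) : AddCircle (1 : ℚ)) :=
    cochainSum_platonicCocycle
  refine ⟨platonicCocycle_mem_ker, ?_, fun y => ?_⟩
  · exact (addOrderOf_injective Φ hΦ _).symm.trans (hΦα ▸ AddCircle.addOrderOf_period_div hn)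
  · have hy : n • Φ y = 0 := by
      have := thirdCohomology.card_nsmul_eq_zero y
      rw [Fintype.card_multiplicative, ZMod.card] at this
      rw [← map_nsmul, this, map_zero]
    obtain ⟨k, hk⟩ := AddSubgroup.mem_zmultiples_iff.mp
      (AddCircle.mem_zmultiples_of_nsmul_eq_zero hn hy)
    exact ⟨k, hΦ <| hk.symm.trans <|
      (congrArg (k • ·) hΦα.symm).trans (map_zsmul Φ k _).symm⟩
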